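/- For all z ∈ ℍ: 0 < inf supp(μ_Σ) ≤ δ·Im m1(z)/Im m(z) ≤ sup supp(μ_Σ). Moreover, for each bounded 𝒟 ⊂ ℍ there exists a constant K₁, depending only on 𝒟, μ_Σ, and μ_T, such that Im(z·m2(z)) ≤ K₁·Im m1(z) for all z ∈ 𝒟. -/

import Mathlib

open MeasureTheory ProbabilityTheory Filter Topology
open scoped ENNReal NNReal

noncomputable section

namespace SpecGLM

/-- The (topological) support of a measure on `ℝ`. -/
def msupport (μ : Measure ℝ) : Set ℝ := {x | ∀ U ∈ nhds x, μ U ≠ 0}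

/-- `k`-th largest eigenvalue (1-indexed) of a real symmetric matrix; junk value `0`
if the matrix is not symmetric. -/
def lambdaK {d : ℕ} (A : Matrix (Fin d) (Fin d) ℝ) (k : ℕ) : ℝ := by
  classical
  exact if hA : A.IsHermitian then
    (((List.ofFn hA.eigenvalues).insertionSort (· ≥ ·)).getD (k - 1) 0)
  else 0

/-- Empirical distribution of a finite family of real numbers. -/
def esdVec {n : ℕ} (v : Fin n → ℝ) : Measure ℝ :=
  (n : ℝ≥0∞)⁻¹ • ∑ i, Measure.dirac (v i)

/-- Empirical spectral distribution of a real symmetric matrix. -/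
def esd {d : ℕ} (A : Matrix (Fin d) (Fin d) ℝ) : Measure ℝ := by
  classical
  exact if hA : A.IsHermitian then esdVec hA.eigenvalues else 0

/-- Weak convergence of a sequence of measures on `ℝ`. -/
def WeakTendsto (ν : ℕ → Measure ℝ) (ν' : Measure ℝ) : Prop :=
  ∀ f : BoundedContinuousFunction ℝ ℝ,
    Tendsto (fun k => ∫ x, f x ∂(ν k)) atTop (𝓝 (∫ x, f x ∂ν'))

/-- Convergence in probability of a sequence of real random variables to a constant. -/
def TendstoInProbability {Ω : Type*} [MeasurableSpace Ω] (μ : Measure Ω)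
    (X : ℕ → Ω → ℝ) (c : ℝ) : Prop :=
  ∀ ε : ℝ, 0 < ε → Tendsto (fun k => μ {ω | ε ≤ |X k ω - c|}) atTop (𝓝 0)

/-- Almost sure convergence of a sequence of real random variables to a constant. -/
def TendstoAlmostSurely {Ω : Type*} [MeasurableSpace Ω] (μ : Measure Ω)
    (X : ℕ → Ω → ℝ) (c : ℝ) : Prop :=
  ∀ᵐ ω ∂μ, Tendsto (fun k => X k ω) atTop (𝓝 c)

/-- Pseudo-Lipschitz functions of finite order. -/
def PseudoLipschitz (f : ℝ → ℝ) : Prop :=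
  ∃ (j : ℕ) (L : ℝ), ∀ x y : ℝ,
    |f x - f y| ≤ L * |x - y| * (1 + |x| ^ (j - 1) + |y| ^ (j - 1))

/-- A finite family of real random variables is i.i.d. with common law `ν`. -/
def IIDLaw {Ω : Type*} [MeasurableSpace Ω] (μ : Measure Ω) {ι : Type*} [Fintype ι]
    (f : ι → Ω → ℝ) (ν : Measure ℝ) : Prop :=
  (∀ i, Measurable (f i)) ∧ (∀ i, Measure.map (f i) μ = ν) ∧
    iIndepFun f μ

/-- The positive semidefinite square root of a matrix (junk value `0` if not psd). -/
def sqrtMat {d : ℕ} (A : Matrix (Fin d) (Fin d) ℝ) : Matrix (Fin d) (Fin d) ℝ := by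
  classical
  exact if hA : A.PosSemidef then
    hA.1.eigenvectorUnitary.1 * Matrix.diagonal (fun i => Real.sqrt (hA.1.eigenvalues i)) *
      (star hA.1.eigenvectorUnitary : Matrix (Fin d) (Fin d) ℝ) else 0

/-- Euclidean norm of a vector. -/
def vnorm {d : ℕ} (v : Fin d → ℝ) : ℝ := Real.sqrt (∑ i, v i ^ 2)

/-- Euclidean inner product. -/
def dot {d : ℕ} (u v : Fin d → ℝ) : ℝ := ∑ i, u i * v i

/-- A probability space bundled as a structure. -/
structure ProbSpace where
  carrier : Type
  inst : MeasurableSpace carrier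
  meas : @Measure carrier inst
  prob : @IsProbabilityMeasure carrier inst meas

attribute [instance] ProbSpace.inst ProbSpace.prob

end SpecGLM
namespace SpecGLM

/-- The complex upper half-plane. -/
def UH : Set ℂ := {z | 0 < z.im}

/-- Meromorphy at a point: some power of `(· - z)` times `f` is analytic at `z`. -/
def MeroAt (f : ℂ → ℂ) (z : ℂ) : Prop :=
  ∃ k : ℕ, AnalyticAt ℂ (fun w => (w - z) ^ k * f w) z

/-- Data for the deterministic random-matrix system: aspect ratio and the limiting
spectral distributions `μ_T`, `μ_Σ`. -/
structure RMT where
  delta : ℝ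
  muT : Measure ℝ
  muS : Measure ℝ

namespace RMT

variable (R : RMT)

/-- `sup supp μ_T`. -/
def tauT : ℝ := sSup (msupport R.muT)

/-- `sup supp μ_Σ`. -/
def sSig : ℝ := sSup (msupport R.muS)

/-- `inf supp μ_Σ`. -/
def iSig : ℝ := sInf (msupport R.muS)

/-- `∫ s dμ_Σ(s)`. -/
def meanS : ℝ := ∫ s, s ∂(R.muS)

/-- `c(a) = ∫ t/(a - t) dμ_T(t)`. -/
def cfun (a : ℝ) : ℝ := ∫ t, t / (a - t) ∂(R.muT)

/-- The left end `s(a)` of the admissible interval for `γ(a)`. -/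
def sfun (a : ℝ) : ℝ :=
  if 0 < R.cfun a then R.cfun a * R.sSig
  else if R.cfun a < 0 then R.cfun a * R.iSig else 0

/-- `γ(a)` is the unique solution in `(s(a), ∞)` of
`1 = (1/δ) ∫ s/(γ(a) - c(a)s) dμ_Σ(s)`. -/
def IsGammaFun (γ : ℝ → ℝ) : Prop :=
  ∀ a, R.tauT < a →
    R.sfun a < γ a ∧ 1 = (1 / R.delta) * ∫ s, s / (γ a - R.cfun a * s) ∂(R.muS) ∧
      ∀ g, R.sfun a < g →
        1 = (1 / R.delta) * ∫ s, s / (g - R.cfun a * s) ∂(R.muS) → g = γ a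

/-- Basic assumptions on the data. -/
def Basic : Prop :=
  0 < R.delta ∧ IsProbabilityMeasure R.muT ∧ IsProbabilityMeasure R.muS ∧
    (∃ C : ℝ, msupport R.muT ⊆ Set.Icc (-C) C) ∧
    (∃ l u : ℝ, 0 < l ∧ msupport R.muS ⊆ Set.Icc l u) ∧
    R.muT ≠ Measure.dirac 0 ∧ R.muS ≠ Measure.dirac 0 ∧ 0 < R.tauT

/-- Thick-edge assumptions. -/
def ThickEdge : Prop :=
  Tendsto (fun a => ∫ t, t / (a - t) ∂(R.muT)) (𝓝[>] R.tauT) atTop ∧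
  Tendsto (fun a => ∫ t, t ^ 2 / (a - t) ^ 2 ∂(R.muT)) (𝓝[>] R.tauT) atTop ∧
  Tendsto (fun w => |∫ s, s / (s - w) ∂(R.muS)|) (𝓝[>] R.sSig) atTop ∧
  Tendsto (fun w => ∫ s, s ^ 2 / (s - w) ^ 2 ∂(R.muS)) (𝓝[>] R.sSig) atTop ∧
  Tendsto (fun w => ∫ s, s ^ 3 / (s - w) ^ 2 ∂(R.muS)) (𝓝[>] R.sSig) atTop ∧
  Tendsto (fun w => |∫ s, s / (s - w) ∂(R.muS)|) (𝓝[<] R.iSig) atTop ∧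
  Tendsto (fun w => ∫ s, s ^ 2 / (s - w) ^ 2 ∂(R.muS)) (𝓝[<] R.iSig) atTop ∧
  Tendsto (fun w => ∫ s, s ^ 3 / (s - w) ^ 2 ∂(R.muS)) (𝓝[<] R.iSig) atTop

/-- The system of equations satisfied by `(m(z), m₁(z), m₂(z))` at `z`. -/
def SystemEqAt (z w w1 w2 : ℂ) : Prop :=
  (-(z * w) = (1 - (R.delta : ℂ)) +
      (R.delta : ℂ) * ∫ t, (1 + w1 * (t : ℂ))⁻¹ ∂(R.muT)) ∧
  (-(z * w) = ∫ s, (1 + w2 * (s : ℂ))⁻¹ ∂(R.muS)) ∧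
  (-(z * w) = 1 + (R.delta : ℂ) * z * w1 * w2)

/-- `(m, m₁, m₂)` is the (unique) solution of the system, subject to
`m(z) ∈ ℍ`, `m₁(z) ∈ ℍ`, `z m₂(z) ∈ ℍ`. -/
def IsSystemSolution (m m1 m2 : ℂ → ℂ) : Prop :=
  ∀ z ∈ UH,
    m z ∈ UH ∧ m1 z ∈ UH ∧ z * m2 z ∈ UH ∧ R.SystemEqAt z (m z) (m1 z) (m2 z) ∧
    ∀ w w1 w2 : ℂ, w ∈ UH → w1 ∈ UH → z * w2 ∈ UH → R.SystemEqAt z w w1 w2 →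
      w = m z ∧ w1 = m1 z ∧ w2 = m2 z

/-- `I₁(z, z̄) = ∫ t²/|1 + m₁(z)t|² dμ_T(t)`. -/
def I1sq (m1 : ℂ → ℂ) (z : ℂ) : ℝ :=
  ∫ t, t ^ 2 / Complex.normSq (1 + m1 z * (t : ℂ)) ∂(R.muT)

/-- `I₂(z, z̄) = ∫ s²/|1 + m₂(z)s|² dμ_Σ(s)`. -/
def I2sq (m2 : ℂ → ℂ) (z : ℂ) : ℝ :=
  ∫ s, s ^ 2 / Complex.normSq (1 + m2 z * (s : ℂ)) ∂(R.muS)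

end RMT

/-- `m` is the Stieltjes transform of the measure `ν` on `ℝ`. -/
def IsStieltjesOf (ν : Measure ℝ) (m : ℂ → ℂ) : Prop :=
  ∀ z ∈ UH, m z = ∫ x, ((x : ℂ) - z)⁻¹ ∂ν

end SpecGLM
/-!
Write `ζ = z m₂(z)`. Since `1 + m₂ s = z⁻¹ (z + sζ)`, the second and third equations give
`m = -∫ (z + sζ)⁻¹ dμ_Σ(s)` and `δ m₁ = -∫ s (z + sζ)⁻¹ dμ_Σ(s)`, while the first and third give
`ζ = -∫ t (1 + m₁t)⁻¹ dμ_T(t)`. For `s ≥ 0` the weight `Im (-(z + sζ)⁻¹)` is nonnegative, so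
`δ Im m₁ / Im m` is an average of `s` over `supp μ_Σ`; this is the first claim.

For the second, `Im ζ = Im m₁ ∫ t² / |1 + m₁t|² dμ_T`, which is at most `4C² Im m₁` when
`|m₁| C ≤ 1/2` (with `supp μ_T ⊆ [-C, C]`). Otherwise Jensen's inequality gives
`Im ζ |δ m₁|² ≤ Im ζ ∫ s² / |z + sζ|² dμ_Σ ≤ δ Im m₁`, hence `Im ζ ≤ 4C² Im m₁ / δ`.
-/

namespace SpecGLM

open Set

lemma msupport_eq_support (μ : Measure ℝ) : msupport μ = μ.support := by
  ext x
  simp [msupport, Measure.mem_support_iff_forall, pos_iff_ne_zero]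

lemma msupport_nonempty (μ : Measure ℝ) [NeZero μ] : (msupport μ).Nonempty :=
  msupport_eq_support μ ▸ Measure.nonempty_support (NeZero.ne μ)

lemma ae_mem_msupport (μ : Measure ℝ) : ∀ᵐ x ∂μ, x ∈ msupport μ := by
  rw [msupport_eq_support]
  exact Measure.support_mem_ae

lemma ae_mem_Icc_sInf_sSup_msupport {μ : Measure ℝ} (hb : BddBelow (msupport μ))
    (ha : BddAbove (msupport μ)) :
    ∀ᵐ x ∂μ, x ∈ Icc (sInf (msupport μ)) (sSup (msupport μ)) := by
  filter_upwards [ae_mem_msupport μ] with x hx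
  exact ⟨csInf_le hb hx, le_csSup ha hx⟩

lemma integrable_of_continuousOn_of_ae_mem {X E : Type*} [TopologicalSpace X] [T2Space X]
    [MeasurableSpace X] [OpensMeasurableSpace X] [NormedAddCommGroup E] {μ : Measure X}
    [IsFiniteMeasure μ] {K : Set X} {f : X → E} (hK : IsCompact K) (hμK : ∀ᵐ x ∂μ, x ∈ K)
    (hf : ContinuousOn f K) : Integrable f μ := by
  rw [← Measure.restrict_eq_self_of_ae_mem hμK]
  exact hf.integrableOn_compact hK

lemma norm_integral_sq_le_integral_norm_sq {Ω E : Type*} [MeasurableSpace Ω]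
    [NormedAddCommGroup E] [NormedSpace ℝ E] {μ : Measure Ω} [IsProbabilityMeasure μ]
    {f : Ω → E} (hf : MemLp f 2 μ) : ‖∫ x, f x ∂μ‖ ^ 2 ≤ ∫ x, ‖f x‖ ^ 2 ∂μ := by
  have hvar := ProbabilityTheory.variance_nonneg (fun x => ‖f x‖) μ
  rw [ProbabilityTheory.variance_eq_sub hf.norm, sub_nonneg] at hvar
  exact (pow_le_pow_left₀ (norm_nonneg _) (norm_integral_le_integral_norm f) 2).trans hvar

section WeightedMean

variable {μ : Measure ℝ} {f : ℝ → ℝ}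

lemma mul_integral_le_integral_mul {a : ℝ} (hf : Integrable f μ)
    (hxf : Integrable (fun x => x * f x) μ) (hf0 : ∀ᵐ x ∂μ, 0 ≤ f x) (ha : ∀ᵐ x ∂μ, a ≤ x) :
    a * ∫ x, f x ∂μ ≤ ∫ x, x * f x ∂μ := by
  rw [← integral_const_mul]
  refine integral_mono_ae (hf.const_mul a) hxf ?_
  filter_upwards [hf0, ha] with x hfx hax
  exact mul_le_mul_of_nonneg_right hax hfx

lemma integral_mul_le_mul_integral {b : ℝ} (hf : Integrable f μ)
    (hxf : Integrable (fun x => x * f x) μ) (hf0 : ∀ᵐ x ∂μ, 0 ≤ f x) (hb : ∀ᵐ x ∂μ, x ≤ b) :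
    ∫ x, x * f x ∂μ ≤ b * ∫ x, f x ∂μ := by
  rw [← integral_const_mul]
  refine integral_mono_ae hxf (hf.const_mul b) ?_
  filter_upwards [hf0, hb] with x hfx hxb
  exact mul_le_mul_of_nonneg_right hxb hfx

end WeightedMean

lemma im_integral {α : Type*} [MeasurableSpace α] {μ : Measure α} {f : α → ℂ}
    (hf : Integrable f μ) : (∫ x, f x ∂μ).im = ∫ x, (f x).im ∂μ :=
  (integral_im hf).symm

lemma integral_inv_one_add_mul_sub_one {μ : Measure ℝ} [IsProbabilityMeasure μ] {w : ℂ}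
    (hne : ∀ᵐ x : ℝ ∂μ, 1 + w * x ≠ 0) (hint : Integrable (fun x : ℝ => (1 + w * x)⁻¹) μ) :
    ∫ x : ℝ, (1 + w * x)⁻¹ ∂μ - 1 = -(w * ∫ x : ℝ, x * (1 + w * x)⁻¹ ∂μ) := by
  calc ∫ x : ℝ, (1 + w * x)⁻¹ ∂μ - 1 = ∫ x : ℝ, ((1 + w * x)⁻¹ - 1) ∂μ := by
        rw [integral_sub hint (integrable_const 1)]; simp
    _ = ∫ x : ℝ, -(w * (x * (1 + w * x)⁻¹)) ∂μ := by
        refine integral_congr_ae ?_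
        filter_upwards [hne] with x hx
        field_simp
        ring
    _ = -(w * ∫ x : ℝ, x * (1 + w * x)⁻¹ ∂μ) := by rw [integral_neg, integral_const_mul]

section Resolvent

variable {z ζ : ℂ}

lemma im_add_ofReal_mul_pos (hz : 0 < z.im) (hζ : 0 ≤ ζ.im) {s : ℝ} (hs : 0 ≤ s) :
    0 < (z + s * ζ).im := by
  simp only [Complex.add_im, Complex.im_ofReal_mul]
  positivity

lemma continuousOn_inv_add_ofReal_mul (hz : 0 < z.im) (hζ : 0 ≤ ζ.im) :
    ContinuousOn (fun s : ℝ => (z + s * ζ)⁻¹) (Ici 0) :=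
  (by fun_prop : Continuous fun s : ℝ => z + s * ζ).continuousOn.inv₀ fun _ hs h =>
    (im_add_ofReal_mul_pos hz hζ hs).ne' (by rw [h, Complex.zero_im])

lemma im_neg_inv_add_ofReal_mul_nonneg (hz : 0 < z.im) (hζ : 0 ≤ ζ.im) {s : ℝ} (hs : 0 ≤ s) :
    0 ≤ (-(z + s * ζ)⁻¹).im := by
  rw [Complex.neg_im, Complex.inv_im, neg_div, neg_neg]
  exact div_nonneg (im_add_ofReal_mul_pos hz hζ hs).le (Complex.normSq_nonneg _)

lemma im_mul_norm_sq_le_im_neg_ofReal_mul_inv (hz : 0 < z.im) {s : ℝ}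
    (hs : 0 ≤ s) : ζ.im * ‖(s : ℂ) * (z + s * ζ)⁻¹‖ ^ 2 ≤ (-(s * (z + s * ζ)⁻¹)).im := by
  have hnorm : ‖(s : ℂ) * (z + s * ζ)⁻¹‖ ^ 2 = s ^ 2 / Complex.normSq (z + s * ζ) := by
    rw [norm_mul, norm_inv, Complex.norm_real, Real.norm_eq_abs, mul_pow, sq_abs, inv_pow,
      Complex.sq_norm, div_eq_mul_inv]
  have him :
      (-(s * (z + s * ζ)⁻¹)).im = s * (z.im + s * ζ.im) / Complex.normSq (z + s * ζ) := by
    simp [Complex.inv_im]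
    ring
  rw [hnorm, him, mul_div_assoc']
  exact div_le_div_of_nonneg_right (by nlinarith [mul_nonneg hs hz.le])
    (Complex.normSq_nonneg _)

variable {μ : Measure ℝ} {a b : ℝ}

lemma integrable_of_continuousOn_Ici_of_ae_mem_Icc {E : Type*} [NormedAddCommGroup E]
    [IsFiniteMeasure μ] (hμ : ∀ᵐ s ∂μ, s ∈ Icc a b) (ha : 0 ≤ a) {f : ℝ → E}
    (hf : ContinuousOn f (Ici 0)) :
    Integrable f μ :=
  integrable_of_continuousOn_of_ae_mem isCompact_Icc hμ
    (hf.mono (Icc_subset_Ici_self.trans (Ici_subset_Ici.2 ha)))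

lemma im_neg_integral_ofReal_mul_inv_mem_Icc [IsFiniteMeasure μ] (hμ : ∀ᵐ s ∂μ, s ∈ Icc a b)
    (ha : 0 ≤ a) (hz : 0 < z.im) (hζ : 0 ≤ ζ.im) :
    (-∫ s : ℝ, s * (z + s * ζ)⁻¹ ∂μ).im ∈
      Icc (a * (-∫ s : ℝ, (z + s * ζ)⁻¹ ∂μ).im) (b * (-∫ s : ℝ, (z + s * ζ)⁻¹ ∂μ).im) := by
  have hinv := continuousOn_inv_add_ofReal_mul hz hζ
  have hr : Integrable (fun s : ℝ => -(z + s * ζ)⁻¹) μ :=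
    integrable_of_continuousOn_Ici_of_ae_mem_Icc hμ ha (by fun_prop)
  have hsr : Integrable (fun s : ℝ => -(s * (z + s * ζ)⁻¹)) μ :=
    integrable_of_continuousOn_Ici_of_ae_mem_Icc hμ ha (by fun_prop)
  have hsw : Integrable (fun s : ℝ => s * (-(z + s * ζ)⁻¹).im) μ := by
    refine hsr.im.congr (ae_of_all _ fun s => ?_)
    simp
  have hw : ∀ᵐ s : ℝ ∂μ, 0 ≤ (-(z + s * ζ)⁻¹).im := by
    filter_upwards [hμ] with s hs
    exact im_neg_inv_add_ofReal_mul_nonneg hz hζ (ha.trans hs.1)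
  have hG : (-∫ s : ℝ, (z + s * ζ)⁻¹ ∂μ).im = ∫ s : ℝ, (-(z + s * ζ)⁻¹).im ∂μ := by
    rw [← integral_neg, im_integral hr]
  have hF : (-∫ s : ℝ, s * (z + s * ζ)⁻¹ ∂μ).im = ∫ s : ℝ, s * (-(z + s * ζ)⁻¹).im ∂μ := by
    rw [← integral_neg, im_integral hsr]
    simp
  rw [hG, hF]
  exact ⟨mul_integral_le_integral_mul hr.im hsw hw (hμ.mono fun s hs => hs.1),
    integral_mul_le_mul_integral hr.im hsw hw (hμ.mono fun s hs => hs.2)⟩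

lemma im_mul_norm_integral_sq_le [IsProbabilityMeasure μ] (hμ : ∀ᵐ s ∂μ, s ∈ Icc a b)
    (ha : 0 ≤ a) (hz : 0 < z.im) (hζ : 0 ≤ ζ.im) :
    ζ.im * ‖∫ s : ℝ, s * (z + s * ζ)⁻¹ ∂μ‖ ^ 2 ≤ (-∫ s : ℝ, s * (z + s * ζ)⁻¹ ∂μ).im := by
  have hinv := continuousOn_inv_add_ofReal_mul hz hζ
  have hsr : Integrable (fun s : ℝ => s * (z + s * ζ)⁻¹) μ :=
    integrable_of_continuousOn_Ici_of_ae_mem_Icc hμ ha (by fun_prop)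
  have hsr2 : Integrable (fun s : ℝ => ‖(s : ℂ) * (z + s * ζ)⁻¹‖ ^ 2) μ :=
    integrable_of_continuousOn_Ici_of_ae_mem_Icc hμ ha (by fun_prop)
  have hL2 : MemLp (fun s : ℝ => s * (z + s * ζ)⁻¹) 2 μ :=
    (memLp_two_iff_integrable_sq_norm hsr.aestronglyMeasurable).2 hsr2
  calc ζ.im * ‖∫ s : ℝ, s * (z + s * ζ)⁻¹ ∂μ‖ ^ 2
      ≤ ζ.im * ∫ s : ℝ, ‖(s : ℂ) * (z + s * ζ)⁻¹‖ ^ 2 ∂μ :=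
        mul_le_mul_of_nonneg_left (norm_integral_sq_le_integral_norm_sq hL2) hζ
    _ = ∫ s : ℝ, ζ.im * ‖(s : ℂ) * (z + s * ζ)⁻¹‖ ^ 2 ∂μ := (integral_const_mul _ _).symm
    _ ≤ ∫ s : ℝ, (-(s * (z + s * ζ)⁻¹)).im ∂μ := by
        refine integral_mono_ae (hsr2.const_mul _) hsr.neg.im ?_
        filter_upwards [hμ] with s hs
        exact im_mul_norm_sq_le_im_neg_ofReal_mul_inv hz (ha.trans hs.1)
    _ = (-∫ s : ℝ, s * (z + s * ζ)⁻¹ ∂μ).im := by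
        rw [← integral_neg, im_integral hsr.fun_neg]

end Resolvent

section OneAddMul

variable {w : ℂ} {μ : Measure ℝ} {C : ℝ}

lemma one_add_mul_ofReal_ne_zero (hw : w.im ≠ 0) (t : ℝ) : 1 + w * t ≠ 0 := by
  intro h
  have him : w.im * t = 0 := by simpa using congrArg Complex.im h
  rcases mul_eq_zero.1 him with hw0 | rfl
  · exact hw hw0
  · simp at h

lemma im_neg_integral_ofReal_mul_inv_one_add_mul [IsFiniteMeasure μ]
    (hμ : ∀ᵐ t ∂μ, t ∈ Icc (-C) C) (hw : w.im ≠ 0) :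
    (-∫ t : ℝ, t * (1 + w * t)⁻¹ ∂μ).im =
      w.im * ∫ t : ℝ, t ^ 2 / Complex.normSq (1 + w * t) ∂μ := by
  have hcont : Continuous fun t : ℝ => (1 + w * t)⁻¹ :=
    (by fun_prop : Continuous fun t : ℝ => 1 + w * t).inv₀ (one_add_mul_ofReal_ne_zero hw)
  have hint : Integrable (fun t : ℝ => -(t * (1 + w * t)⁻¹)) μ :=
    integrable_of_continuousOn_of_ae_mem isCompact_Icc hμ (by fun_prop)
  rw [← integral_neg, im_integral hint, ← integral_const_mul]
  congr 1 with t
  simp [Complex.inv_im]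
  ring

lemma integral_sq_div_normSq_one_add_mul_le [IsProbabilityMeasure μ]
    (hμ : ∀ᵐ t ∂μ, t ∈ Icc (-C) C) (hwC : ‖w‖ * C ≤ 1 / 2) :
    ∫ t : ℝ, t ^ 2 / Complex.normSq (1 + w * t) ∂μ ≤ 4 * C ^ 2 := by
  have hbound : ∀ᵐ t : ℝ ∂μ, t ^ 2 / Complex.normSq (1 + w * t) ≤ 4 * C ^ 2 := by
    filter_upwards [hμ] with t ht
    have htC : |t| ≤ C := abs_le.2 ht
    have hnorm : 1 / 2 ≤ ‖1 + w * t‖ := by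
      have h1 : ‖(w * t : ℂ)‖ ≤ 1 / 2 := by
        rw [norm_mul, Complex.norm_real, Real.norm_eq_abs]
        exact (mul_le_mul_of_nonneg_left htC (norm_nonneg w)).trans hwC
      have h2 := norm_sub_norm_le (1 : ℂ) (-(w * t))
      rw [sub_neg_eq_add, norm_neg, norm_one] at h2
      linarith
    have hN : 1 / 4 ≤ Complex.normSq (1 + w * t) := by
      rw [← Complex.sq_norm]
      nlinarith
    rw [div_le_iff₀ (by linarith)]
    nlinarith [sq_abs t, abs_nonneg t]
  calc ∫ t : ℝ, t ^ 2 / Complex.normSq (1 + w * t) ∂μ ≤ ∫ _ : ℝ, 4 * C ^ 2 ∂μ :=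
        integral_mono_of_nonneg
          (ae_of_all _ fun t => div_nonneg (sq_nonneg t) (Complex.normSq_nonneg _))
          (integrable_const _) hbound
    _ = 4 * C ^ 2 := by simp

end OneAddMul

lemma inv_one_add_mul_eq_mul_inv {z : ℂ} (hz : z ≠ 0) (w x : ℂ) :
    (1 + w * x)⁻¹ = z * (z + x * (z * w))⁻¹ := by
  rw [show z + x * (z * w) = z * (1 + w * x) by ring, mul_inv, ← mul_assoc, mul_inv_cancel₀ hz,
    one_mul]

namespace RMT

variable {R : RMT} {z w w1 w2 : ℂ} {a b : ℝ}

lemma SystemEqAt.eq_neg_integral_inv (h : R.SystemEqAt z w w1 w2) (hz : z ≠ 0) :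
    w = -∫ s : ℝ, (z + s * (z * w2))⁻¹ ∂(R.muS) := by
  have h2 := h.2.1
  simp_rw [inv_one_add_mul_eq_mul_inv hz, integral_const_mul] at h2
  apply mul_left_cancel₀ hz
  linear_combination -h2

lemma SystemEqAt.delta_mul_eq_neg_integral (h : R.SystemEqAt z w w1 w2)
    [IsProbabilityMeasure R.muS] (hS : ∀ᵐ s ∂(R.muS), s ∈ Icc a b) (ha : 0 ≤ a)
    (hz : 0 < z.im) (hζ : 0 < (z * w2).im) :
    R.delta * w1 = -∫ s : ℝ, s * (z + s * (z * w2))⁻¹ ∂(R.muS) := by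
  have hz0 : z ≠ 0 := by rintro rfl; simp at hz
  have hζ0 : z * w2 ≠ 0 := by intro h0; simp [h0] at hζ
  have hne : ∀ᵐ s : ℝ ∂(R.muS), 1 + w2 * s ≠ 0 := by
    filter_upwards [hS] with s hs
    intro h0
    have hpos := im_add_ofReal_mul_pos hz hζ.le (ha.trans hs.1)
    rw [show z + s * (z * w2) = z * (1 + w2 * s) by ring, h0, mul_zero, Complex.zero_im] at hpos
    exact hpos.false
  have hint : Integrable (fun s : ℝ => (1 + w2 * s)⁻¹) R.muS := by
    simp_rw [inv_one_add_mul_eq_mul_inv hz0]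
    have hinv := continuousOn_inv_add_ofReal_mul hz hζ.le
    exact integrable_of_continuousOn_Ici_of_ae_mem_Icc hS ha (by fun_prop)
  have hJ : ∫ s : ℝ, s * (1 + w2 * s)⁻¹ ∂(R.muS) =
      z * ∫ s : ℝ, s * (z + s * (z * w2))⁻¹ ∂(R.muS) := by
    rw [← integral_const_mul]
    congr 1 with s
    rw [inv_one_add_mul_eq_mul_inv hz0]
    ring
  have key := integral_inv_one_add_mul_sub_one hne hint
  apply mul_left_cancel₀ hζ0
  linear_combination -h.2.2 + h.2.1 + key - w2 * hJ

lemma SystemEqAt.mul_eq_neg_integral {C : ℝ} (h : R.SystemEqAt z w w1 w2) (hδ : R.delta ≠ 0)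
    [IsProbabilityMeasure R.muT] (hT : ∀ᵐ t ∂(R.muT), t ∈ Icc (-C) C) (hw1 : 0 < w1.im) :
    z * w2 = -∫ t : ℝ, t * (1 + w1 * t)⁻¹ ∂(R.muT) := by
  have hne := one_add_mul_ofReal_ne_zero hw1.ne'
  have hint : Integrable (fun t : ℝ => (1 + w1 * t)⁻¹) R.muT :=
    integrable_of_continuousOn_of_ae_mem isCompact_Icc hT
      ((by fun_prop : Continuous fun t : ℝ => 1 + w1 * t).inv₀ hne).continuousOn
  have key := integral_inv_one_add_mul_sub_one (ae_of_all _ hne) hint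
  have hδw1 : (R.delta : ℂ) * w1 ≠ 0 :=
    mul_ne_zero (Complex.ofReal_ne_zero.2 hδ) (by rintro rfl; simp at hw1)
  apply mul_left_cancel₀ hδw1
  linear_combination -h.2.2 + h.1 + (R.delta : ℂ) * key

lemma SystemEqAt.delta_mul_im_mem_Icc (h : R.SystemEqAt z w w1 w2)
    [IsProbabilityMeasure R.muS] (hS : ∀ᵐ s ∂(R.muS), s ∈ Icc a b) (ha : 0 ≤ a)
    (hz : 0 < z.im) (hζ : 0 < (z * w2).im) :
    R.delta * w1.im ∈ Icc (a * w.im) (b * w.im) := by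
  rw [h.eq_neg_integral_inv (by rintro rfl; simp at hz), ← Complex.im_ofReal_mul R.delta,
    h.delta_mul_eq_neg_integral hS ha hz hζ]
  exact im_neg_integral_ofReal_mul_inv_mem_Icc hS ha hz hζ.le

lemma SystemEqAt.im_mul_mul_sq_le (h : R.SystemEqAt z w w1 w2) (hδ : 0 ≤ R.delta)
    [IsProbabilityMeasure R.muS] (hS : ∀ᵐ s ∂(R.muS), s ∈ Icc a b) (ha : 0 ≤ a)
    (hz : 0 < z.im) (hζ : 0 < (z * w2).im) :
    (z * w2).im * (R.delta * ‖w1‖) ^ 2 ≤ R.delta * w1.im := by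
  have hJensen := im_mul_norm_integral_sq_le hS ha hz hζ.le
  rwa [← neg_neg (∫ s : ℝ, _ ∂(R.muS)), ← h.delta_mul_eq_neg_integral hS ha hz hζ, norm_neg,
    neg_neg, norm_mul, Complex.norm_real, Real.norm_of_nonneg hδ,
    Complex.im_ofReal_mul] at hJensen

lemma SystemEqAt.im_mul_eq {C : ℝ} (h : R.SystemEqAt z w w1 w2) (hδ : R.delta ≠ 0)
    [IsProbabilityMeasure R.muT] (hT : ∀ᵐ t ∂(R.muT), t ∈ Icc (-C) C) (hw1 : 0 < w1.im) :
    (z * w2).im = w1.im * ∫ t : ℝ, t ^ 2 / Complex.normSq (1 + w1 * t) ∂(R.muT) := by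
  rw [h.mul_eq_neg_integral hδ hT hw1]
  exact im_neg_integral_ofReal_mul_inv_one_add_mul hT hw1.ne'

lemma SystemEqAt.im_mul_le {C : ℝ} (h : R.SystemEqAt z w w1 w2) (hδ : 0 < R.delta)
    [IsProbabilityMeasure R.muT] [IsProbabilityMeasure R.muS]
    (hT : ∀ᵐ t ∂(R.muT), t ∈ Icc (-C) C) (hS : ∀ᵐ s ∂(R.muS), s ∈ Icc a b) (ha : 0 ≤ a)
    (hz : 0 < z.im) (hw1 : 0 < w1.im) (hζ : 0 < (z * w2).im) :
    (z * w2).im ≤ 4 * C ^ 2 * (1 + R.delta⁻¹) * w1.im := by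
  rcases le_or_gt (‖w1‖ * C) (1 / 2) with hsmall | hlarge
  · calc (z * w2).im ≤ w1.im * (4 * C ^ 2) := by
          rw [h.im_mul_eq hδ.ne' hT hw1]
          exact mul_le_mul_of_nonneg_left (integral_sq_div_normSq_one_add_mul_le hT hsmall) hw1.le
      _ ≤ 4 * C ^ 2 * (1 + R.delta⁻¹) * w1.im := by
          have : 0 ≤ 4 * C ^ 2 * R.delta⁻¹ * w1.im := by positivity
          nlinarith
  · have hJ := h.im_mul_mul_sq_le hδ.le hS ha hz hζ
    have h1 : 1 ≤ 4 * C ^ 2 * ‖w1‖ ^ 2 := by nlinarith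
    have h2 : (z * w2).im * ‖w1‖ ^ 2 ≤ w1.im / R.delta := by
      rw [le_div_iff₀ hδ]
      nlinarith
    calc (z * w2).im ≤ (z * w2).im * (4 * C ^ 2 * ‖w1‖ ^ 2) := le_mul_of_one_le_right hζ.le h1
      _ = 4 * C ^ 2 * ((z * w2).im * ‖w1‖ ^ 2) := by ring
      _ ≤ 4 * C ^ 2 * (w1.im / R.delta) := by gcongr
      _ ≤ 4 * C ^ 2 * (1 + R.delta⁻¹) * w1.im := by
          have : 0 ≤ 4 * C ^ 2 * w1.im := by positivity
          rw [div_eq_mul_inv]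
          nlinarith

end RMT

/-- **Lemma (comparison of imaginary parts).** For all `z ∈ ℍ`,
`0 < inf supp μ_Σ ≤ δ Im m₁(z)/Im m(z) ≤ sup supp μ_Σ`; moreover for every bounded
`𝒟 ⊂ ℍ` there is a constant `K₁` with `Im(z m₂(z)) ≤ K₁ Im m₁(z)` on `𝒟`. -/
theorem imaginary_parts_comparison
    (R : RMT) (hB : R.Basic)
    (m m1 m2 : ℂ → ℂ) (hsol : R.IsSystemSolution m m1 m2) :
    (∀ z ∈ UH,
      0 < R.iSig ∧
      R.iSig ≤ R.delta * (m1 z).im / (m z).im ∧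
      R.delta * (m1 z).im / (m z).im ≤ R.sSig) ∧
    (∀ 𝒟 : Set ℂ, 𝒟 ⊆ UH → Bornology.IsBounded 𝒟 →
      ∃ K1 : ℝ, ∀ z ∈ 𝒟, (z * m2 z).im ≤ K1 * (m1 z).im) := by
  obtain ⟨hδ, hT, hS, ⟨C, hCT⟩, ⟨l, u, hl, hluS⟩, -, -, -⟩ := hB
  have hTC : ∀ᵐ t ∂(R.muT), t ∈ Icc (-C) C := (ae_mem_msupport _).mono fun t ht => hCT ht
  have hSig : ∀ᵐ s ∂(R.muS), s ∈ Icc R.iSig R.sSig :=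
    ae_mem_Icc_sInf_sSup_msupport ⟨l, fun s hs => (hluS hs).1⟩ ⟨u, fun s hs => (hluS hs).2⟩
  have hiSig : 0 < R.iSig :=
    hl.trans_le (le_csInf (msupport_nonempty _) fun s hs => (hluS hs).1)
  refine ⟨fun z hz => ?_, fun 𝒟 h𝒟 _ => ⟨4 * C ^ 2 * (1 + R.delta⁻¹), fun z hz => ?_⟩⟩
  · obtain ⟨hm, -, hζ, hsys, -⟩ := hsol z hz
    obtain ⟨hlow, hupp⟩ := hsys.delta_mul_im_mem_Icc hSig hiSig.le hz hζ
    exact ⟨hiSig, (le_div_iff₀ hm).2 hlow, (div_le_iff₀ hm).2 hupp⟩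
  · obtain ⟨-, hm1, hζ, hsys, -⟩ := hsol z (h𝒟 hz)
    exact hsys.im_mul_le hδ hTC hSig hiSig.le (h𝒟 hz) hm1 hζ

end SpecGLM
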